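/- arXiv:2308.01024 — 2 statements merged into one kernel-verified Lean document; each statement's English description precedes it below -/
import Mathlib

section
/- Let n ≥ 1. Let A be an n×(n−1) spin matrix with guard qubits a_{i,−1} = +1 and a_{i,n−1} = −1, and let B be an (n−1)×n spin matrix with guard qubits b_{−1,j} = +1 and b_{n−1,j} = −1. Define Δa_{i,j} = a_{i,j−1} − a_{i,j} and Δb_{i,j} = b_{i−1,j} − b_{i,j} for 0 ≤ i, j ≤ n−1. Then the Hamiltonian H_d^{nn}(A,B) = (1/2)·Σ_{i,j} (Δa_{i,j})^2 + (1/2)·Σ_{i,j} (Δb_{i,j})^2 + (1/2)·Σ_{i,j} (Δa_{i,j} − Δb_{i,j})^2 (a rational number) satisfies H_d^{nn}(A,B) ≥ 4n, and H_d^{nn}(A,B) = 4n if and only if every guard-extended row of A is a spin domain-wall vector, every guard-extended column of B is a spin domain-wall vector, and Δa_{i,j} = Δb_{i,j} for all i, j. -/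
/-- Guard-extended row of the spin matrix `A` (rows of length `n-1`, guard qubits
`a_{i,-1} = +1` at shifted index `0` and `a_{i,n-1} = -1` at shifted index `n`). -/
def gA (n : ℕ) (A : ℕ → ℕ → ℤ) (i j : ℕ) : ℤ :=
  if j = 0 then 1 else if j < n then A i (j - 1) else -1

/-- `Δa_{i,j} = a_{i,j-1} - a_{i,j}` computed on the guard-extended rows of `A`. -/
def dA (n : ℕ) (A : ℕ → ℕ → ℤ) (i j : ℕ) : ℤ := gA n A i j - gA n A i (j + 1)

/-- Guard-extended column of the spin matrix `B` (columns of length `m-1`, guard qubits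
`b_{-1,j} = +1` at shifted index `0` and `b_{m-1,j} = -1` at shifted index `m`). -/
def gB (m : ℕ) (B : ℕ → ℕ → ℤ) (i j : ℕ) : ℤ :=
  if i = 0 then 1 else if i < m then B (i - 1) j else -1

/-- `Δb_{i,j} = b_{i-1,j} - b_{i,j}` computed on the guard-extended columns of `B`. -/
def dB (m : ℕ) (B : ℕ → ℕ → ℤ) (i j : ℕ) : ℤ := gB m B i j - gB m B (i + 1) j

/-- Row domain-wall condition: every guard-extended row of the `m × (n-1)` spin matrix `A`
is a spin domain-wall vector. -/
def RowDW (m n : ℕ) (A : ℕ → ℕ → ℤ) : Prop :=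
  ∀ i < m, ∃ t ≤ n - 1, ∀ j < n - 1, (j < t → A i j = 1) ∧ (t ≤ j → A i j = -1)

/-- Column domain-wall condition: every guard-extended column of the `(m-1) × n` spin
matrix `B` is a spin domain-wall vector. -/
def ColDW (m n : ℕ) (B : ℕ → ℕ → ℤ) : Prop :=
  ∀ j < n, ∃ t ≤ m - 1, ∀ i < m - 1, (i < t → B i j = 1) ∧ (t ≤ i → B i j = -1)

/-- The dual-matrix domain-wall Ising Hamiltonian
`H_dⁿⁿ(A,B) = ½ ΣΣ (Δa)² + ½ ΣΣ (Δb)² + ½ ΣΣ (Δa - Δb)²` over `0 ≤ i, j ≤ n-1`. -/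
def Hd (m n : ℕ) (A B : ℕ → ℕ → ℤ) : ℚ :=
  (1 / 2 : ℚ) * ∑ i ∈ Finset.range m, ∑ j ∈ Finset.range n, (dA n A i j : ℚ) ^ 2 +
  (1 / 2 : ℚ) * ∑ i ∈ Finset.range m, ∑ j ∈ Finset.range n, (dB m B i j : ℚ) ^ 2 +
  (1 / 2 : ℚ) * ∑ i ∈ Finset.range m, ∑ j ∈ Finset.range n,
    ((dA n A i j : ℚ) - (dB m B i j : ℚ)) ^ 2

/-!
For spins `a, b ∈ {±1}` one has `(a - b)² ≥ 2 (a - b)`, with equality iff `b ≤ a`. Along a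
guard-extended row (or column), which runs from `+1` to `-1`, the terms `2 (a - b)` telescope to
`4`, so each of the `n` rows and `n` columns contributes at least `4` to `∑ (Δa)²`, resp.
`∑ (Δb)²`, with equality iff the row (column) is non-increasing, i.e. a domain wall. Together with
`(Δa - Δb)² ≥ 0` this gives `2 H ≥ 8n`, with equality iff all three bounds are attained.
-/

def IsSpin (a : ℤ) : Prop := a = -1 ∨ a = 1

namespace IsSpin

variable {a b : ℤ}

theorem two_mul_sub_le_sq (ha : IsSpin a) (hb : IsSpin b) : 2 * (a - b) ≤ (a - b) ^ 2 := by
  rcases ha with rfl | rfl <;> rcases hb with rfl | rfl <;> decide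

theorem sq_sub_eq_two_mul_iff (ha : IsSpin a) (hb : IsSpin b) :
    (a - b) ^ 2 = 2 * (a - b) ↔ b ≤ a := by
  rcases ha with rfl | rfl <;> rcases hb with rfl | rfl <;> decide

end IsSpin

open Finset

section SpinChain

variable {n : ℕ} {g : ℕ → ℤ}

theorem sum_two_mul_sub_succ (h0 : g 0 = 1) (hn : g n = -1) :
    ∑ j ∈ range n, 2 * (g j - g (j + 1)) = 4 := by
  rw [← mul_sum, sum_range_sub' g, h0, hn]; norm_num

theorem two_mul_sub_succ_le_sq (hg : ∀ j ≤ n, IsSpin (g j)) :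
    ∀ j ∈ range n, 2 * (g j - g (j + 1)) ≤ (g j - g (j + 1)) ^ 2 := fun j hj ↦
  (hg j (mem_range.mp hj).le).two_mul_sub_le_sq (hg (j + 1) (mem_range.mp hj))

theorem four_le_sum_sq_sub_succ (hg : ∀ j ≤ n, IsSpin (g j)) (h0 : g 0 = 1) (hn : g n = -1) :
    4 ≤ ∑ j ∈ range n, (g j - g (j + 1)) ^ 2 :=
  calc 4 = ∑ j ∈ range n, 2 * (g j - g (j + 1)) := (sum_two_mul_sub_succ h0 hn).symm
    _ ≤ _ := sum_le_sum (two_mul_sub_succ_le_sq hg)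

theorem sum_sq_sub_succ_eq_four_iff (hg : ∀ j ≤ n, IsSpin (g j)) (h0 : g 0 = 1)
    (hn : g n = -1) :
    ∑ j ∈ range n, (g j - g (j + 1)) ^ 2 = 4 ↔ ∀ j < n, g (j + 1) ≤ g j := by
  rw [← sum_two_mul_sub_succ h0 hn, eq_comm, sum_eq_sum_iff_of_le (two_mul_sub_succ_le_sq hg)]
  refine forall_congr' fun j ↦ ?_
  rw [mem_range]
  refine imp_congr_right fun hj ↦ ?_
  rw [eq_comm, (hg j hj.le).sq_sub_eq_two_mul_iff (hg (j + 1) hj)]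

theorem forall_succ_le_iff_exists_eq_ite (hg : ∀ j ≤ n, IsSpin (g j)) (h0 : g 0 = 1)
    (hn : g n = -1) :
    (∀ j < n, g (j + 1) ≤ g j) ↔ ∃ t < n, ∀ j ≤ n, g j = if j ≤ t then 1 else -1 := by
  constructor
  · intro hanti
    obtain ⟨k, rfl⟩ : ∃ k, n = k + 1 :=
      Nat.exists_eq_succ_of_ne_zero (by rintro rfl; rw [h0] at hn; norm_num at hn)
    have hwall : ∃ t, g (t + 1) = -1 := ⟨k, hn⟩
    set t := Nat.find hwall
    have hafter : ∀ j, t + 1 ≤ j → j ≤ k + 1 → g j = -1 := by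
      intro j htj
      induction j, htj using Nat.le_induction with
      | base => exact fun _ ↦ Nat.find_spec hwall
      | succ j htj ih =>
        intro hj
        have hle : g (j + 1) ≤ -1 := (ih (by omega)) ▸ hanti j (by omega)
        exact (hg (j + 1) hj).resolve_right (by omega)
    refine ⟨t, Nat.lt_succ_of_le (Nat.find_min' hwall hn), fun j hj ↦ ?_⟩
    split_ifs with hjt
    · rcases j with _ | j
      · exact h0
      · exact (hg (j + 1) hj).resolve_left (Nat.find_min hwall (by omega))
    · exact hafter j (by omega) hj
  · rintro ⟨t, -, ht⟩ j hj
    rw [ht j hj.le, ht (j + 1) hj]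
    split_ifs <;> omega

end SpinChain

section GuardedRow

variable {n : ℕ} {A : ℕ → ℕ → ℤ} {i : ℕ}

theorem gA_zero : gA n A i 0 = 1 := rfl

theorem gA_self (hn : 0 < n) : gA n A i n = -1 := by
  simp [gA, hn.ne']

theorem gA_succ {j : ℕ} (hj : j < n - 1) : gA n A i (j + 1) = A i j := by
  simp only [gA, Nat.add_sub_cancel, if_neg j.succ_ne_zero, if_pos (show j + 1 < n by omega)]

theorem isSpin_gA (hAi : ∀ j < n - 1, IsSpin (A i j)) (j : ℕ) : IsSpin (gA n A i j) := by
  unfold gA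
  split_ifs
  · exact Or.inr rfl
  · exact hAi (j - 1) (by omega)
  · exact Or.inl rfl

theorem exists_gA_eq_ite_iff (hn : 0 < n) :
    (∃ t < n, ∀ j ≤ n, gA n A i j = if j ≤ t then 1 else -1) ↔
      ∃ t ≤ n - 1, ∀ j < n - 1, (j < t → A i j = 1) ∧ (t ≤ j → A i j = -1) := by
  constructor
  · rintro ⟨t, htn, ht⟩
    refine ⟨t, by omega, fun j hj ↦ ?_⟩
    rw [← gA_succ (A := A) (i := i) hj, ht (j + 1) (by omega)]
    constructor <;> intro <;> split_ifs <;> omega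
  · rintro ⟨t, htn, ht⟩
    refine ⟨t, by omega, fun j hj ↦ ?_⟩
    rcases j with _ | j
    · rfl
    rcases lt_or_ge j (n - 1) with hj' | hj'
    · rw [gA_succ hj']
      split_ifs with hjt
      · exact (ht j hj').1 (by omega)
      · exact (ht j hj').2 (by omega)
    · rw [show j + 1 = n by omega, gA_self hn, if_neg (by omega)]

theorem four_le_sum_sq_dA (hn : 0 < n) (hAi : ∀ j < n - 1, IsSpin (A i j)) :
    4 ≤ ∑ j ∈ range n, dA n A i j ^ 2 :=
  four_le_sum_sq_sub_succ (fun j _ ↦ isSpin_gA hAi j) gA_zero (gA_self hn)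

theorem sum_sq_dA_eq_four_iff (hn : 0 < n) (hAi : ∀ j < n - 1, IsSpin (A i j)) :
    ∑ j ∈ range n, dA n A i j ^ 2 = 4 ↔
      ∃ t ≤ n - 1, ∀ j < n - 1, (j < t → A i j = 1) ∧ (t ≤ j → A i j = -1) :=
  have hg : ∀ j ≤ n, IsSpin (gA n A i j) := fun j _ ↦ isSpin_gA hAi j
  (sum_sq_sub_succ_eq_four_iff hg gA_zero (gA_self hn)).trans <|
    (forall_succ_le_iff_exists_eq_ite hg gA_zero (gA_self hn)).trans (exists_gA_eq_ite_iff hn)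

end GuardedRow

section SpinMatrix

variable {m n : ℕ}

theorem four_mul_le_sum_sum_sq_dA {A : ℕ → ℕ → ℤ} (hn : 0 < n)
    (hA : ∀ i < m, ∀ j < n - 1, IsSpin (A i j)) :
    4 * m ≤ ∑ i ∈ range m, ∑ j ∈ range n, dA n A i j ^ 2 :=
  calc (4 * m : ℤ) = ∑ _i ∈ range m, 4 := by simp [mul_comm]
    _ ≤ _ := sum_le_sum fun i hi ↦ four_le_sum_sq_dA hn (hA i (mem_range.mp hi))

theorem sum_sum_sq_dA_eq_four_mul_iff {A : ℕ → ℕ → ℤ} (hn : 0 < n)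
    (hA : ∀ i < m, ∀ j < n - 1, IsSpin (A i j)) :
    ∑ i ∈ range m, ∑ j ∈ range n, dA n A i j ^ 2 = 4 * m ↔ RowDW m n A := by
  rw [show (4 * m : ℤ) = ∑ _i ∈ range m, 4 by simp [mul_comm], eq_comm,
    sum_eq_sum_iff_of_le fun i hi ↦ four_le_sum_sq_dA hn (hA i (mem_range.mp hi))]
  refine forall_congr' fun i ↦ ?_
  rw [mem_range]
  exact imp_congr_right fun hi ↦ eq_comm.trans (sum_sq_dA_eq_four_iff hn (hA i hi))

/- `dB m B i j` and `ColDW m n B` are, by definition, `dA m Bᵀ j i` and `RowDW n m Bᵀ`. -/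
theorem four_mul_le_sum_sum_sq_dB {B : ℕ → ℕ → ℤ} (hm : 0 < m)
    (hB : ∀ i < m - 1, ∀ j < n, IsSpin (B i j)) :
    4 * n ≤ ∑ i ∈ range m, ∑ j ∈ range n, dB m B i j ^ 2 := by
  rw [sum_comm]
  exact four_mul_le_sum_sum_sq_dA (A := fun j i ↦ B i j) hm fun j hj i hi ↦ hB i hi j hj

theorem sum_sum_sq_dB_eq_four_mul_iff {B : ℕ → ℕ → ℤ} (hm : 0 < m)
    (hB : ∀ i < m - 1, ∀ j < n, IsSpin (B i j)) :
    ∑ i ∈ range m, ∑ j ∈ range n, dB m B i j ^ 2 = 4 * n ↔ ColDW m n B := by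
  rw [sum_comm]
  exact sum_sum_sq_dA_eq_four_mul_iff (A := fun j i ↦ B i j) hm fun j hj i hi ↦ hB i hi j hj

end SpinMatrix

theorem sum_sum_sq_sub_eq_zero_iff {ι κ R : Type*} [Ring R] [LinearOrder R] [IsStrictOrderedRing R]
    {s : Finset ι} {t : Finset κ} {f g : ι → κ → R} :
    ∑ i ∈ s, ∑ j ∈ t, (f i j - g i j) ^ 2 = 0 ↔ ∀ i ∈ s, ∀ j ∈ t, f i j = g i j := by
  rw [sum_eq_zero_iff_of_nonneg fun i _ ↦ sum_nonneg fun j _ ↦ sq_nonneg _]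
  refine forall₂_congr fun i _ ↦ ?_
  rw [sum_eq_zero_iff_of_nonneg fun j _ ↦ sq_nonneg _]
  simp only [sq_eq_zero_iff, sub_eq_zero]

/-- For an `n × (n-1)` spin matrix `A` and an `(n-1) × n` spin matrix `B` (with guard
qubits), the Hamiltonian `H_dⁿⁿ(A,B)` is at least `4n`, and equals `4n` iff every
guard-extended row of `A` is a spin domain-wall vector, every guard-extended column of `B`
is a spin domain-wall vector, and `Δa_{i,j} = Δb_{i,j}` for all `i, j`. -/
theorem dual_matrix_domain_wall_hamiltonian (n : ℕ) (hn : 1 ≤ n) (A B : ℕ → ℕ → ℤ)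
    (hA : ∀ i < n, ∀ j < n - 1, A i j = -1 ∨ A i j = 1)
    (hB : ∀ i < n - 1, ∀ j < n, B i j = -1 ∨ B i j = 1) :
    (4 * n : ℚ) ≤ Hd n n A B ∧
    (Hd n n A B = 4 * n ↔
      RowDW n n A ∧ ColDW n n B ∧ ∀ i < n, ∀ j < n, dA n A i j = dB n B i j) := by
  have hrow := four_mul_le_sum_sum_sq_dA hn hA
  have hcol := four_mul_le_sum_sum_sq_dB hn hB
  have hrow_eq := sum_sum_sq_dA_eq_four_mul_iff hn hA
  have hcol_eq := sum_sum_sq_dB_eq_four_mul_iff hn hB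
  qify at hrow hcol hrow_eq hcol_eq
  have hcoupling :
      0 ≤ ∑ i ∈ range n, ∑ j ∈ range n, ((dA n A i j : ℚ) - dB n B i j) ^ 2 := by
    positivity
  have hcoupling_eq :
      ∑ i ∈ range n, ∑ j ∈ range n, ((dA n A i j : ℚ) - dB n B i j) ^ 2 = 0 ↔
        ∀ i < n, ∀ j < n, dA n A i j = dB n B i j := by
    rw [sum_sum_sq_sub_eq_zero_iff]
    simp only [mem_range, Int.cast_inj]
  unfold Hd
  rw [← hrow_eq, ← hcol_eq, ← hcoupling_eq]
  exact ⟨by linarith, fun h ↦ ⟨by linarith, by linarith, by linarith⟩,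
    fun ⟨h1, h2, h3⟩ ↦ by linarith⟩
end

section
/- (Theorem 2) Let 1 ≤ m ≤ n. Let A be an m×(n−1) spin matrix with guard qubits a_{i,−1} = +1 and a_{i,n−1} = −1, and let B be an (m−1)×n spin matrix with guard qubits b_{−1,j} = +1 and b_{m−1,j} = −1. Define Δa_{i,j} = a_{i,j−1} − a_{i,j} and Δb_{i,j} = b_{i−1,j} − b_{i,j} for 0 ≤ i ≤ m−1 and 0 ≤ j ≤ n−1, and set H_d^{mn}(A,B) = (1/2)·Σ_{i,j} (Δa_{i,j})^2 + (1/2)·Σ_{i,j} (Δb_{i,j})^2 + (1/2)·Σ_{i,j} (Δa_{i,j} − Δb_{i,j})^2. Then H_d^{mn}(A,B) ≥ 4n, and H_d^{mn}(A,B) = 4n if and only if A and B satisfy the row domain-wall condition, the column domain-wall condition, and the dual-permutation condition. -/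
/-- Dual-permutation condition (spin version): for all `i < m` and `j < n`, if
`Δa_{i,j} = 2` then `Δb_{i,j} = 2`. -/
def DualPerm (m n : ℕ) (A B : ℕ → ℕ → ℤ) : Prop :=
  ∀ i < m, ∀ j < n, dA n A i j = 2 → dB m B i j = 2

/-!
Write `x = Δa`, `y = Δb`; the summand of `Hd` is `x² - xy + y²`. Each column of `Δb` telescopes
to `b_{-1,j} - b_{m-1,j} = 2`, so `Σ 2y = 4n` and `Hd - 4n = Σ (x² - xy + y² - 2y)`. For spin
matrices `x, y ∈ {-2, 0, 2}`, where each term is nonnegative, vanishing exactly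
when `x, y ≥ 0` and `x = 2 → y = 2`. Finally, a `±1` row running from `+1` to `-1` is a domain
wall iff it never increases, i.e. iff all its differences are nonnegative.
-/

open Finset

section DomainWall

variable {n : ℕ} {A : ℕ → ℕ → ℤ} {i : ℕ}

lemma gA_eq_one_or_eq_neg_one (hA : ∀ j < n - 1, A i j = -1 ∨ A i j = 1) (j : ℕ) :
    gA n A i j = 1 ∨ gA n A i j = -1 := by
  unfold gA
  split_ifs
  · exact .inl rfl
  · exact (hA (j - 1) (by omega)).symm
  · exact .inr rfl

lemma dA_mem (hA : ∀ j < n - 1, A i j = -1 ∨ A i j = 1) (j : ℕ) :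
    dA n A i j = -2 ∨ dA n A i j = 0 ∨ dA n A i j = 2 := by
  unfold dA
  rcases gA_eq_one_or_eq_neg_one hA j with h | h <;>
    rcases gA_eq_one_or_eq_neg_one hA (j + 1) with h' | h' <;>
    simp [h, h']

lemma gA_eq_ite_of_domainWall {t : ℕ} (ht : t ≤ n - 1)
    (hwall : ∀ j < n - 1, (j < t → A i j = 1) ∧ (t ≤ j → A i j = -1)) (j : ℕ) :
    gA n A i j = if j ≤ t then 1 else -1 := by
  unfold gA
  split_ifs
  all_goals first
    | rfl
    | omega
    | exact (hwall (j - 1) (by omega)).1 (by omega)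
    | exact (hwall (j - 1) (by omega)).2 (by omega)

lemma eq_neg_one_of_dA_nonneg (hA : ∀ j < n - 1, A i j = -1 ∨ A i j = 1)
    (hd : ∀ j < n, 0 ≤ dA n A i j) {t j : ℕ} (ht : A i t = -1) (htj : t ≤ j)
    (hj : j < n - 1) : A i j = -1 := by
  induction j, htj using Nat.le_induction with
  | base => exact ht
  | succ j htj ih =>
    have hstep := hd (j + 1) (by omega)
    simp only [dA, gA, if_neg (Nat.succ_ne_zero _), if_pos (show j + 1 < n by omega),
      if_pos (show j + 2 < n by omega), Nat.add_sub_cancel, ih (by omega)] at hstep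
    rcases hA (j + 1) hj with h | h <;> omega

lemma domainWall_iff_dA_nonneg (hA : ∀ j < n - 1, A i j = -1 ∨ A i j = 1) :
    (∃ t ≤ n - 1, ∀ j < n - 1, (j < t → A i j = 1) ∧ (t ≤ j → A i j = -1)) ↔
      ∀ j < n, 0 ≤ dA n A i j := by
  constructor
  · rintro ⟨t, ht, hwall⟩ j -
    simp only [dA, gA_eq_ite_of_domainWall ht hwall]
    split_ifs <;> omega
  · intro hd
    classical
    have hex : ∃ t, t = n - 1 ∨ A i t = -1 := ⟨n - 1, .inl rfl⟩
    refine ⟨Nat.find hex, Nat.find_min' hex (.inl rfl), fun j hj => ⟨fun hjt => ?_, fun htj => ?_⟩⟩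
    · exact (hA j hj).resolve_left (not_or.mp (Nat.find_min hex hjt)).2
    · refine eq_neg_one_of_dA_nonneg hA hd ?_ htj hj
      exact (Nat.find_spec hex).resolve_left (by omega)

end DomainWall

lemma rowDW_iff_dA_nonneg {m n : ℕ} {A : ℕ → ℕ → ℤ}
    (hA : ∀ i < m, ∀ j < n - 1, A i j = -1 ∨ A i j = 1) :
    RowDW m n A ↔ ∀ i < m, ∀ j < n, 0 ≤ dA n A i j :=
  forall₂_congr fun i hi => domainWall_iff_dA_nonneg (hA i hi)

/-- `ColDW m n B` and `dB m B i j` unfold to `RowDW n m Bᵀ` and `dA m Bᵀ j i`. -/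
lemma colDW_iff_dB_nonneg {m n : ℕ} {B : ℕ → ℕ → ℤ}
    (hB : ∀ i < m - 1, ∀ j < n, B i j = -1 ∨ B i j = 1) :
    ColDW m n B ↔ ∀ i < m, ∀ j < n, 0 ≤ dB m B i j :=
  (rowDW_iff_dA_nonneg (A := fun j i => B i j) fun j hj i hi => hB i hi j hj).trans
    ⟨fun h i hi j hj => h j hj i hi, fun h j hj i hi => h i hi j hj⟩

lemma dB_mem {m n : ℕ} {B : ℕ → ℕ → ℤ} (hB : ∀ i < m - 1, ∀ j < n, B i j = -1 ∨ B i j = 1)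
    (i j : ℕ) (hj : j < n) : dB m B i j = -2 ∨ dB m B i j = 0 ∨ dB m B i j = 2 :=
  dA_mem (A := fun j i => B i j) (fun i hi => hB i hi j hj) i

lemma sum_range_dB {m : ℕ} (hm : 1 ≤ m) (B : ℕ → ℕ → ℤ) (j : ℕ) :
    ∑ i ∈ range m, dB m B i j = 2 := by
  simp only [dB]
  rw [sum_range_sub' (fun i => gB m B i j)]
  simp [gB, Nat.one_le_iff_ne_zero.mp hm]

/-- The summand `½x² + ½y² + ½(x - y)² = x² - xy + y²` of `Hd` at `x = Δa, y = Δb`, less the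
share `2y` of the minimum `4n = Σ 2Δb`. -/
def excess (x y : ℤ) : ℤ := x ^ 2 - x * y + y ^ 2 - 2 * y

lemma excess_nonneg {x y : ℤ} (hx : x = -2 ∨ x = 0 ∨ x = 2) (hy : y = -2 ∨ y = 0 ∨ y = 2) :
    0 ≤ excess x y := by
  rcases hx with rfl | rfl | rfl <;> rcases hy with rfl | rfl | rfl <;> decide

lemma excess_eq_zero_iff {x y : ℤ} (hx : x = -2 ∨ x = 0 ∨ x = 2)
    (hy : y = -2 ∨ y = 0 ∨ y = 2) :
    excess x y = 0 ↔ 0 ≤ x ∧ 0 ≤ y ∧ (x = 2 → y = 2) := by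
  rcases hx with rfl | rfl | rfl <;> rcases hy with rfl | rfl | rfl <;> decide

lemma sum_range_sum_range_eq_zero_iff_of_nonneg {M : Type*} [AddCommMonoid M] [PartialOrder M]
    [IsOrderedAddMonoid M] {m n : ℕ} {f : ℕ → ℕ → M} (hf : ∀ i < m, ∀ j < n, 0 ≤ f i j) :
    ∑ i ∈ range m, ∑ j ∈ range n, f i j = 0 ↔ ∀ i < m, ∀ j < n, f i j = 0 := by
  rw [sum_eq_zero_iff_of_nonneg fun i hi => sum_nonneg fun j hj =>
    hf i (mem_range.mp hi) j (mem_range.mp hj)]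
  simp only [mem_range]
  refine forall₂_congr fun i hi => ?_
  rw [sum_eq_zero_iff_of_nonneg fun j hj => hf i hi j (mem_range.mp hj)]
  simp only [mem_range]

lemma Hd_eq_four_mul_add {m : ℕ} (hm : 1 ≤ m) (n : ℕ) (A B : ℕ → ℕ → ℤ) :
    Hd m n A B =
      4 * n + ((∑ i ∈ range m, ∑ j ∈ range n, excess (dA n A i j) (dB m B i j) : ℤ) : ℚ) := by
  have hsum : ∑ i ∈ range m, ∑ j ∈ range n, (dB m B i j : ℚ) = 2 * n := by
    rw [sum_comm]
    simp [← Int.cast_sum, sum_range_dB hm, mul_comm]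
  calc Hd m n A B
      = ∑ i ∈ range m, ∑ j ∈ range n,
          ((excess (dA n A i j) (dB m B i j) : ℚ) + 2 * dB m B i j) := by
        simp only [Hd, mul_sum, ← sum_add_distrib]
        refine sum_congr rfl fun i _ => sum_congr rfl fun j _ => ?_
        push_cast [excess]
        ring
    _ = 4 * n + _ := by
        rw [add_comm, Int.cast_sum]
        simp only [sum_add_distrib, ← mul_sum, hsum, Int.cast_sum]
        ring

theorem Hd_min_iff_conditions_general (m n : ℕ) (hm : 1 ≤ m)
    (A B : ℕ → ℕ → ℤ)
    (hA : ∀ i < m, ∀ j < n - 1, A i j = -1 ∨ A i j = 1)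
    (hB : ∀ i < m - 1, ∀ j < n, B i j = -1 ∨ B i j = 1) :
    (4 * n : ℚ) ≤ Hd m n A B ∧
    (Hd m n A B = 4 * n ↔ RowDW m n A ∧ ColDW m n B ∧ DualPerm m n A B) := by
  have hdA := fun i hi => dA_mem (hA i hi)
  have hdB := dB_mem hB
  have hexcess : ∀ i < m, ∀ j < n, 0 ≤ excess (dA n A i j) (dB m B i j) :=
    fun i hi j hj => excess_nonneg (hdA i hi j) (hdB i j hj)
  rw [Hd_eq_four_mul_add hm]
  constructor
  · have := sum_nonneg fun i hi => sum_nonneg fun j hj =>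
      hexcess i (mem_range.mp hi) j (mem_range.mp hj)
    exact le_add_of_nonneg_right (by exact_mod_cast this)
  · rw [add_eq_left, Int.cast_eq_zero, sum_range_sum_range_eq_zero_iff_of_nonneg hexcess,
      rowDW_iff_dA_nonneg hA, colDW_iff_dB_nonneg hB, DualPerm]
    calc _ ↔ ∀ i < m, ∀ j < n,
          0 ≤ dA n A i j ∧ 0 ≤ dB m B i j ∧ (dA n A i j = 2 → dB m B i j = 2) :=
          forall₂_congr fun i hi => forall₂_congr fun j hj =>
            excess_eq_zero_iff (hdA i hi j) (hdB i j hj)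
      _ ↔ _ := by simp only [forall_and]

/-- Theorem 2: `H_dᵐⁿ(A,B) ≥ 4n`, with equality iff `A` and `B` satisfy the row
domain-wall, column domain-wall, and dual-permutation conditions. -/
theorem Hd_min_iff_conditions (m n : ℕ) (hm : 1 ≤ m) (hmn : m ≤ n)
    (A B : ℕ → ℕ → ℤ)
    (hA : ∀ i < m, ∀ j < n - 1, A i j = -1 ∨ A i j = 1)
    (hB : ∀ i < m - 1, ∀ j < n, B i j = -1 ∨ B i j = 1) :
    (4 * n : ℚ) ≤ Hd m n A B ∧
    (Hd m n A B = 4 * n ↔ RowDW m n A ∧ ColDW m n B ∧ DualPerm m n A B) :=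
  Hd_min_iff_conditions_general m n hm A B hA hB
end
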